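/- arXiv:2507.12244 — 6 statements merged into one kernel-verified Lean document; each statement's English description precedes it below -/
import Mathlib

section
/- Let G' be a finite set of pairwise non-isomorphic finite simple graphs. For H ∈ G', let f_H : G' → ℚ be the function G ↦ #Ind(H, G). Then the functions {f_H : H ∈ G'} are linearly independent over ℚ. -/
/-!
Order the graphs by number of vertices. A graph contains no induced copy of a non-isomorphic graph
with at least as many vertices, and one induced copy of itself, so the matrix
`(#Ind(H i, H j))` is triangular with respect to this order with nonzero diagonal.
-/

open SimpleGraph

/-- The number of induced copies of `H` in `G`. -/
noncomputable def indCount {α β : Type*} (H : SimpleGraph α) (G : SimpleGraph β) : ℕ :=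
  Nat.card {s : Finset β // Nonempty (H ≃g G.induce (s : Set β))}

/-- The minimal-weight index in the support of a vanishing combination isolates one nonzero term
when evaluating at that index. -/
theorem linearIndependent_of_triangular {ι R α : Type*} [Ring R] [NoZeroDivisors R]
    [LinearOrder α] (w : ι → α) {v : ι → ι → R} (hdiag : ∀ i, v i i ≠ 0)
    (htri : ∀ i j, i ≠ j → w j ≤ w i → v i j = 0) :
    LinearIndependent R v := by
  classical
  rw [linearIndependent_iff']
  intro s g hg
  by_contra! ⟨i₀, hi₀s, hi₀⟩
  obtain ⟨i, hi, hmin⟩ := (s.filter (g · ≠ 0)).exists_min_image w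
    ⟨i₀, Finset.mem_filter.mpr ⟨hi₀s, hi₀⟩⟩
  obtain ⟨his, hgi⟩ := Finset.mem_filter.mp hi
  have hsingle : ∑ k ∈ s, g k * v k i = g i * v i i := by
    refine Finset.sum_eq_single_of_mem i his fun k hks hki => ?_
    by_cases hgk : g k = 0
    · rw [hgk, zero_mul]
    · rw [htri k i hki (hmin k (Finset.mem_filter.mpr ⟨hks, hgk⟩)), mul_zero]
  have hzero : ∑ k ∈ s, g k * v k i = 0 := by
    simpa only [Finset.sum_apply, Pi.smul_apply, smul_eq_mul, Pi.zero_apply] using congrFun hg i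
  exact mul_ne_zero hgi (hdiag i) (hsingle ▸ hzero)

section indCount

variable {α β : Type*} {H : SimpleGraph α} {G : SimpleGraph β}

theorem indCount_pos_self [Fintype β] (G : SimpleGraph β) : 0 < indCount G G :=
  Nat.card_pos_iff.mpr ⟨⟨⟨Finset.univ, ⟨by rw [Finset.coe_univ]; exact (induceUnivIso G).symm⟩⟩⟩,
    inferInstance⟩

theorem nonempty_iso_of_iso_induce_of_card_le [Finite β] {S : Set β} (e : H ≃g G.induce S)
    (h : Nat.card β ≤ Nat.card α) : Nonempty (H ≃g G) := by
  have hS : S = Set.univ := by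
    refine Set.eq_of_subset_of_ncard_le (Set.subset_univ S) ?_
    rw [Set.ncard_univ, ← Nat.card_coe_set_eq, ← Nat.card_congr e.toEquiv]
    exact h
  subst hS
  exact ⟨e.trans (induceUnivIso G)⟩

theorem indCount_eq_zero_of_card_le [Finite β] (h : Nat.card β ≤ Nat.card α)
    (hHG : IsEmpty (H ≃g G)) : indCount H G = 0 := by
  rw [indCount, Nat.card_eq_zero]
  left
  exact ⟨fun ⟨_, ⟨e⟩⟩ => hHG.elim (nonempty_iso_of_iso_induce_of_card_le e h).some⟩

end indCount

theorem stmt2_general {ι : Type*} (n : ι → ℕ) (H : ∀ i, SimpleGraph (Fin (n i)))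
    (hni : ∀ i j, i ≠ j → IsEmpty (H i ≃g H j)) :
    LinearIndependent ℚ (fun i : ι => (fun j : ι => (indCount (H i) (H j) : ℚ))) := by
  refine linearIndependent_of_triangular n (fun i => ?_) fun i j hij hle => ?_
  · exact_mod_cast (indCount_pos_self (H i)).ne'
  · have hcard : Nat.card (Fin (n j)) ≤ Nat.card (Fin (n i)) := by simpa using hle
    rw [indCount_eq_zero_of_card_le hcard (hni i j hij), Nat.cast_zero]

/-- For a finite family `H` of pairwise non-isomorphic finite graphs, the functions
`f_{H i} : G ↦ #Ind(H i, G)` (restricted to the family itself) are linearly independent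
over `ℚ`. -/
theorem stmt2 {ι : Type*} [Fintype ι] (n : ι → ℕ) (H : ∀ i, SimpleGraph (Fin (n i)))
    (hni : ∀ i j, i ≠ j → IsEmpty (H i ≃g H j)) :
    LinearIndependent ℚ (fun i : ι => (fun j : ι => (indCount (H i) (H j) : ℚ))) :=
  stmt2_general n H hni
end

section
/- Let C be a connected finite simple graph with at least 4 vertices. Then #Ind(K3, C) ≤ #Ind(Paw, C) + 2·#Ind(Diamond, C) + 4·#Ind(K4, C), where Paw is the triangle with a pendant edge, Diamond is K4 minus an edge, and K3 and K4 are complete graphs on 3 and 4 vertices respectively. -/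
open SimpleGraph

/-- The paw: a triangle `{0,1,2}` with the pendant edge `{0,3}`. -/
def pawGraph : SimpleGraph (Fin 4) :=
  SimpleGraph.fromRel (fun a b =>
    (a = 0 ∧ b = 1) ∨ (a = 0 ∧ b = 2) ∨ (a = 1 ∧ b = 2) ∨ (a = 0 ∧ b = 3))

/-- The diamond: `K₄` minus the edge `{2,3}`. -/
def diamondGraph : SimpleGraph (Fin 4) :=
  SimpleGraph.fromRel (fun a b =>
    (a = 0 ∧ b = 1) ∨ (a = 0 ∧ b = 2) ∨ (a = 1 ∧ b = 2) ∨ (a = 0 ∧ b = 3) ∨ (a = 1 ∧ b = 3))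

/-!
A triangle `t` of a connected graph with a vertex outside `t` has a neighbour `v ∉ t`, and
`t ∪ {v}` induces a paw, a diamond or a `K₄` according as `v` has 1, 2 or 3 neighbours in `t`.
So every triangle lies in an induced paw, diamond or `K₄`, and these contain 1, 2 and 4 triangles.
-/

open Finset

instance : DecidableRel pawGraph.Adj := fun a b => decidable_of_iff _ (fromRel_adj _ a b).symm

instance : DecidableRel diamondGraph.Adj := fun a b => decidable_of_iff _ (fromRel_adj _ a b).symm

lemma card_cliqueFinset_three_pawGraph : #(pawGraph.cliqueFinset 3) = 1 := by decide

lemma card_cliqueFinset_three_diamondGraph : #(diamondGraph.cliqueFinset 3) = 2 := by decide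

lemma card_cliqueFinset_three_top : #((⊤ : SimpleGraph (Fin 4)).cliqueFinset 3) = 4 := by decide

section InducedCopies

variable {α V : Type*} [Fintype V]

open Classical in
noncomputable def inducedCopies (H : SimpleGraph α) (G : SimpleGraph V) : Finset (Finset V) :=
  {s | Nonempty (H ≃g G.induce (s : Set V))}

variable {H : SimpleGraph α} {G : SimpleGraph V}

lemma mem_inducedCopies {s : Finset V} :
    s ∈ inducedCopies H G ↔ Nonempty (H ≃g G.induce (s : Set V)) := by
  simp [inducedCopies]

lemma card_inducedCopies : #(inducedCopies H G) = indCount H G := by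
  classical
  rw [indCount, Nat.card_eq_fintype_card, Fintype.card_subtype, inducedCopies]

noncomputable def cliquesInCopies (H : SimpleGraph α) (G : SimpleGraph V) [DecidableEq V]
    [DecidableRel G.Adj] (n : ℕ) : Finset (Finset V) :=
  (inducedCopies H G).biUnion fun s => {t ∈ G.cliqueFinset n | t ⊆ s}

end InducedCopies

namespace SimpleGraph

variable {α V : Type*} {G : SimpleGraph V}

lemma nonempty_top_iso_induce_iff_isNClique {n : ℕ} {s : Finset V} :
    Nonempty ((⊤ : SimpleGraph (Fin n)) ≃g G.induce s) ↔ G.IsNClique n s := by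
  rw [isNClique_iff, ← induce_eq_top]
  constructor
  · rintro ⟨e⟩
    refine ⟨?_, ?_⟩
    · ext u w
      rw [← e.symm.map_adj_iff, top_adj, top_adj, e.symm.injective.ne_iff]
    · simpa using (Fintype.card_congr e.toEquiv).symm
  · rintro ⟨hs, hcard⟩
    rw [hs]
    exact ⟨Iso.completeGraph (Fintype.equivFinOfCardEq (by simpa using hcard)).symm⟩

lemma indCount_top_eq_card_cliqueFinset [Fintype V] [DecidableEq V] [DecidableRel G.Adj]
    (n : ℕ) : indCount (⊤ : SimpleGraph (Fin n)) G = #(G.cliqueFinset n) := by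
  rw [← card_inducedCopies]
  congr 1
  ext s
  rw [mem_inducedCopies, mem_cliqueFinset_iff]
  exact nonempty_top_iso_induce_iff_isNClique

section CliquesInInducedCopies

variable [Fintype α] [DecidableEq α] [Fintype V] [DecidableEq V] [DecidableRel G.Adj]

lemma card_cliqueFinset_subset_le_of_iso {H : SimpleGraph α} [DecidableRel H.Adj] {s : Finset V}
    (e : H ≃g G.induce s) (n : ℕ) :
    #{t ∈ G.cliqueFinset n | t ⊆ s} ≤ #(H.cliqueFinset n) := by
  let f : H ↪g G := (Embedding.induce (s : Set V)).comp e.toEmbedding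
  have hrange : ∀ x ∈ s, ∃ i, f i = x := fun x hx => ⟨e.symm ⟨x, hx⟩, by simp [f]⟩
  refine (card_le_card fun t ht => ?_).trans (card_image_le (f := fun u => u.map f.toEmbedding))
  obtain ⟨ht, hts⟩ := mem_filter.mp ht
  set u := t.preimage f f.injective.injOn
  have hu : u.map f.toEmbedding = t := by
    ext x
    simp only [mem_map, mem_preimage, u]
    constructor
    · rintro ⟨i, hi, rfl⟩
      exact hi
    · intro hx
      obtain ⟨i, rfl⟩ := hrange x (hts hx)
      exact ⟨i, hx, rfl⟩
  refine mem_image.mpr ⟨u, mem_cliqueFinset_iff.mpr ?_, hu⟩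
  rw [← hu, mem_cliqueFinset_iff, isNClique_iff, card_map] at ht
  refine (isNClique_iff _).mpr ⟨fun i hi j hj hij => ?_, ht.2⟩
  exact f.map_adj_iff.mp (ht.1 (mem_map_of_mem _ hi) (mem_map_of_mem _ hj) (f.injective.ne hij))

lemma card_cliquesInCopies_le (H : SimpleGraph α) [DecidableRel H.Adj] (n : ℕ) :
    #(cliquesInCopies H G n) ≤ #(H.cliqueFinset n) * indCount H G := by
  rw [cliquesInCopies, ← card_inducedCopies, mul_comm, ← smul_eq_mul]
  refine card_biUnion_le.trans (sum_le_card_nsmul _ _ _ fun s hs => ?_)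
  obtain ⟨e⟩ := mem_inducedCopies.mp hs
  exact card_cliqueFinset_subset_le_of_iso e n

end CliquesInInducedCopies

lemma Preconnected.exists_adj_of_mem_of_notMem (hG : G.Preconnected) {s : Set V} {a u : V}
    (ha : a ∈ s) (hu : u ∉ s) : ∃ x ∈ s, ∃ v ∉ s, G.Adj x v := by
  obtain ⟨d, -, hd, hd'⟩ := (hG a u).some.exists_boundary_dart s ha hu
  exact ⟨d.fst, hd, d.snd, hd', d.adj⟩

lemma nonempty_iso_induce_map_univ [Fintype α] {H : SimpleGraph α} (f : α ↪ V)
    (hf : G.comap f = H) : Nonempty (H ≃g G.induce (univ.map f : Finset V)) := by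
  subst hf
  rw [coe_map, coe_univ, Set.image_univ]
  exact ⟨(Embedding.comap f G).isoInduceRange⟩

section TriangleWithNeighbour

variable {a b c v : V}

lemma comap_eq_pawGraph (hab : G.Adj a b) (hac : G.Adj a c) (hbc : G.Adj b c) (hav : G.Adj a v)
    (hbv : ¬G.Adj b v) (hcv : ¬G.Adj c v) : G.comap ![a, b, c, v] = pawGraph := by
  ext i j
  fin_cases i <;> fin_cases j <;>
    simp [pawGraph, hab, hac, hbc, hav, hbv, hcv, hab.symm, hac.symm, hbc.symm, G.adj_comm v]

lemma comap_eq_diamondGraph (hab : G.Adj a b) (hac : G.Adj a c) (hbc : G.Adj b c)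
    (hav : G.Adj a v) (hbv : G.Adj b v) (hcv : ¬G.Adj c v) :
    G.comap ![a, b, c, v] = diamondGraph := by
  ext i j
  fin_cases i <;> fin_cases j <;>
    simp [diamondGraph, hab, hac, hbc, hav, hbv, hcv, hab.symm, hac.symm, hbc.symm, G.adj_comm v]

lemma comap_eq_top (hab : G.Adj a b) (hac : G.Adj a c) (hbc : G.Adj b c) (hav : G.Adj a v)
    (hbv : G.Adj b v) (hcv : G.Adj c v) : G.comap ![a, b, c, v] = ⊤ := by
  ext i j
  fin_cases i <;> fin_cases j <;>
    simp [hab, hac, hbc, hav, hbv, hcv, hab.symm, hac.symm, hbc.symm, hav.symm, hbv.symm, hcv.symm]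

lemma injective_vecCons_four (hab : a ≠ b) (hac : a ≠ c) (hav : a ≠ v) (hbc : b ≠ c)
    (hbv : b ≠ v) (hcv : c ≠ v) : Function.Injective ![a, b, c, v] := by
  intro i j h
  fin_cases i <;> fin_cases j <;> simp_all [eq_comm]

lemma exists_superset_iso_of_triangle_of_adj [DecidableEq V] (hab : G.Adj a b) (hac : G.Adj a c)
    (hbc : G.Adj b c) (hav : G.Adj a v) (hvb : v ≠ b) (hvc : v ≠ c) :
    ∃ s : Finset V, {a, b, c} ⊆ s ∧ (Nonempty (pawGraph ≃g G.induce s) ∨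
      Nonempty (diamondGraph ≃g G.induce s) ∨
      Nonempty ((⊤ : SimpleGraph (Fin 4)) ≃g G.induce s)) := by
  have hinj := injective_vecCons_four hab.ne hac.ne hav.ne hbc.ne hvb.symm hvc.symm
  have hsub : {a, b, c} ⊆ univ.map ⟨_, hinj⟩ := by
    simp [insert_subset_iff, Fin.exists_fin_succ]
  by_cases hbv : G.Adj b v <;> by_cases hcv : G.Adj c v
  · exact ⟨_, hsub, .inr <| .inr <| nonempty_iso_induce_map_univ _
      (comap_eq_top hab hac hbc hav hbv hcv)⟩
  · exact ⟨_, hsub, .inr <| .inl <| nonempty_iso_induce_map_univ _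
      (comap_eq_diamondGraph hab hac hbc hav hbv hcv)⟩
  · have hinj' := injective_vecCons_four hac.ne hab.ne hav.ne hbc.ne.symm hvc.symm hvb.symm
    have hsub' : {a, b, c} ⊆ univ.map ⟨_, hinj'⟩ := by
      simp [insert_subset_iff, Fin.exists_fin_succ]
    exact ⟨_, hsub', .inr <| .inl <| nonempty_iso_induce_map_univ _
      (comap_eq_diamondGraph hac hab hbc.symm hav hcv hbv)⟩
  · exact ⟨_, hsub, .inl <| nonempty_iso_induce_map_univ _
      (comap_eq_pawGraph hab hac hbc hav hbv hcv)⟩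

end TriangleWithNeighbour

lemma exists_superset_iso_paw_or_diamond_or_top [Fintype V] (hG : G.Preconnected)
    (hV : 3 < Fintype.card V) {t : Finset V} (ht : G.IsNClique 3 t) :
    ∃ s : Finset V, t ⊆ s ∧ (Nonempty (pawGraph ≃g G.induce s) ∨
      Nonempty (diamondGraph ≃g G.induce s) ∨
      Nonempty ((⊤ : SimpleGraph (Fin 4)) ≃g G.induce s)) := by
  classical
  obtain ⟨u, -, hu⟩ := exists_mem_notMem_of_card_lt_card (s := t) (t := univ)
    (by rwa [ht.card_eq, card_univ])
  obtain ⟨a₀, ha₀⟩ : t.Nonempty := card_pos.mp (by rw [ht.card_eq]; norm_num)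
  obtain ⟨a, ha, v, hv, hav⟩ := hG.exists_adj_of_mem_of_notMem (s := t) ha₀ hu
  rw [mem_coe] at ha hv
  obtain ⟨b, c, -, htab⟩ := card_eq_two.mp (show #(t.erase a) = 2 by
    rw [card_erase_of_mem ha, ht.card_eq])
  obtain rfl : t = {a, b, c} := by rw [← insert_erase ha, htab]
  obtain ⟨hab, hac, hbc⟩ := is3Clique_triple_iff.mp ht
  simp only [mem_insert, mem_singleton, not_or] at hv
  exact exists_superset_iso_of_triangle_of_adj hab hac hbc hav hv.2.1 hv.2.2

lemma cliqueFinset_three_subset_cliquesInCopies [Fintype V] [DecidableEq V] [DecidableRel G.Adj]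
    (hG : G.Preconnected) (hV : 3 < Fintype.card V) :
    G.cliqueFinset 3 ⊆ cliquesInCopies pawGraph G 3 ∪ cliquesInCopies diamondGraph G 3
      ∪ cliquesInCopies (⊤ : SimpleGraph (Fin 4)) G 3 := by
  intro t ht
  obtain ⟨s, hts, hs⟩ := exists_superset_iso_paw_or_diamond_or_top hG hV
    (mem_cliqueFinset_iff.mp ht)
  have hmem {H : SimpleGraph (Fin 4)} (h : Nonempty (H ≃g G.induce s)) :
      t ∈ cliquesInCopies H G 3 :=
    mem_biUnion.mpr ⟨s, mem_inducedCopies.mpr h, mem_filter.mpr ⟨ht, hts⟩⟩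
  rcases hs with h | h | h
  · exact mem_union_left _ (mem_union_left _ (hmem h))
  · exact mem_union_left _ (mem_union_right _ (hmem h))
  · exact mem_union_right _ (hmem h)

end SimpleGraph

/-- In a connected graph with at least 4 vertices,
`#Ind(K₃, C) ≤ #Ind(Paw, C) + 2·#Ind(Diamond, C) + 4·#Ind(K₄, C)`. -/
theorem stmt7 {V : Type*} [Fintype V] (C : SimpleGraph V) (hconn : C.Connected)
    (h4 : 4 ≤ Fintype.card V) :
    indCount (⊤ : SimpleGraph (Fin 3)) C ≤
      indCount pawGraph C + 2 * indCount diamondGraph C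
        + 4 * indCount (⊤ : SimpleGraph (Fin 4)) C := by
  classical
  rw [indCount_top_eq_card_cliqueFinset]
  calc #(C.cliqueFinset 3)
      ≤ #(cliquesInCopies pawGraph C 3 ∪ cliquesInCopies diamondGraph C 3
          ∪ cliquesInCopies ⊤ C 3) :=
        card_le_card (cliqueFinset_three_subset_cliquesInCopies hconn.preconnected h4)
    _ ≤ #(cliquesInCopies pawGraph C 3) + #(cliquesInCopies diamondGraph C 3)
          + #(cliquesInCopies ⊤ C 3) :=
        (card_union_le _ _).trans (Nat.add_le_add_right (card_union_le _ _) _)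
    _ ≤ #(pawGraph.cliqueFinset 3) * indCount pawGraph C
          + #(diamondGraph.cliqueFinset 3) * indCount diamondGraph C
          + #((⊤ : SimpleGraph (Fin 4)).cliqueFinset 3) * indCount ⊤ C :=
        add_le_add_three (card_cliquesInCopies_le _ 3) (card_cliquesInCopies_le _ 3)
          (card_cliquesInCopies_le _ 3)
    _ = _ := by
        rw [card_cliqueFinset_three_pawGraph, card_cliqueFinset_three_diamondGraph,
          card_cliqueFinset_three_top, one_mul]
end

section
/- In a locally small, finitely M-well-powered category C with a proper (E, M)-factorization system, every morphism f : a → a belonging to M is an isomorphism. -/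
/-!
The powers `f, f², f³, …` of an endomorphism `f ∈ M` all lie in `M`, so by finite well-poweredness
two of them, `fᵐ` and `fᵐ⁺ᵏ` with `k ≥ 1`, represent the same subobject: `fᵐ = e ≫ fᵏ ≫ fᵐ` for an
automorphism `e`. Cancelling the monomorphism `fᵐ` makes `fᵏ` the inverse of `e`, and an
endomorphism with an invertible positive power is invertible.
-/

open CategoryTheory

universe u v

/-- The `M`-subobjects of `b`: morphisms into `b` belonging to `M`, identified up to
precomposition with an isomorphism of the domain. -/
def MSubClasses {C : Type u} [Category.{v} C] (M : MorphismProperty C) (b : C) :=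
  Quot (fun (p q : Σ a : C, {f : a ⟶ b // M f}) =>
    ∃ e : p.1 ≅ q.1, e.hom ≫ q.2.1 = p.2.1)

namespace MSubClasses

variable {C : Type u} [Category.{v} C] {M : MorphismProperty C} {b : C}

theorem exists_iso_of_mk_eq_mk {p q : Σ a : C, {f : a ⟶ b // M f}}
    (h : (Quot.mk _ p : MSubClasses M b) = Quot.mk _ q) :
    ∃ e : p.1 ≅ q.1, e.hom ≫ q.2.1 = p.2.1 := by
  refine (Equivalence.eqvGen_iff ⟨fun p => ⟨Iso.refl _, Category.id_comp _⟩, ?_, ?_⟩).mp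
    (Quot.eqvGen_exact h)
  · rintro p q ⟨e, he⟩
    exact ⟨e.symm, by rw [Iso.symm_hom, ← he, Iso.inv_hom_id_assoc]⟩
  · rintro p q r ⟨e, he⟩ ⟨e', he'⟩
    exact ⟨e.trans e', by rw [Iso.trans_hom, Category.assoc, he', he]⟩

end MSubClasses

namespace CategoryTheory

variable {C : Type u} [Category.{v} C]

theorem isIso_of_hom_comp_comp_eq_self {X Y Z : C} (e : X ≅ Z) (g : Z ⟶ X) (h : X ⟶ Y) [Mono h]
    (w : e.hom ≫ g ≫ h = h) : IsIso g := by
  have hg : e.hom ≫ g = 𝟙 X := by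
    rw [← cancel_mono h, Category.assoc, w, Category.id_comp]
  rw [e.hom_comp_eq_id.mp hg]
  infer_instance

theorem isIso_of_isIso_pow {X : C} (f : End X) {k : ℕ} (hk : k ≠ 0) (h : IsIso (f ^ k)) :
    IsIso f := by
  rw [← isUnit_iff_isIso] at h ⊢
  exact (isUnit_pow_iff hk).mp h

theorem isIso_of_iso_hom_comp_pow_eq_pow {X : C} (f : End X) {m n : ℕ} (hmn : m < n)
    [Mono (f ^ m)] (e : X ≅ X) (w : e.hom ≫ (f ^ n : End X) = f ^ m) : IsIso f := by
  obtain ⟨k, rfl⟩ := Nat.exists_eq_add_of_lt hmn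
  rw [add_assoc, pow_add, End.mul_def] at w
  exact isIso_of_isIso_pow f k.succ_ne_zero (isIso_of_hom_comp_comp_eq_self e _ _ w)

end CategoryTheory

theorem stmt12_general {C : Type u} [Category.{v} C] (M : MorphismProperty C)
    (hMcomp : ∀ {X Y Z : C} (f : X ⟶ Y) (g : Y ⟶ Z), M f → M g → M (f ≫ g))
    -- properness
    (hMmono : ∀ {X Y : C} (f : X ⟶ Y), M f → Mono f)
    -- finitely `M`-well-powered
    (hwp : ∀ b : C, Finite (MSubClasses M b))
    {a : C} (f : a ⟶ a) (hf : M f) : IsIso f := by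
  have hM : ∀ n, M (End.of f ^ (n + 1)) := by
    intro n
    induction n with
    | zero => simpa using hf
    | succ n ih => simpa only [pow_succ, End.mul_def] using hMcomp _ _ hf ih
  let cls : ℕ → MSubClasses M a := fun n => Quot.mk _ ⟨a, _, hM n⟩
  obtain ⟨m, n, hne, hmn⟩ := Finite.exists_ne_map_eq_of_infinite cls
  wlog hlt : m < n generalizing m n
  · exact this n m hne.symm hmn.symm (by omega)
  obtain ⟨e, he⟩ := MSubClasses.exists_iso_of_mk_eq_mk hmn
  have := hMmono _ (hM m)
  exact isIso_of_iso_hom_comp_pow_eq_pow (End.of f) (Nat.succ_lt_succ hlt) e he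

/-- In a (locally small) finitely `M`-well-powered category with a proper
`(E, M)`-factorization system, every morphism `f : a ⟶ a` in `M` is an isomorphism. -/
theorem stmt12 {C : Type u} [Category.{v} C] (E M : MorphismProperty C)
    -- every morphism factors as a morphism in `E` followed by a morphism in `M`
    (fact : ∀ {X Y : C} (f : X ⟶ Y),
      ∃ (Z : C) (e : X ⟶ Z) (m : Z ⟶ Y), E e ∧ M m ∧ e ≫ m = f)
    -- uniqueness of the factorization up to a unique isomorphism
    (uniq : ∀ {X Y : C} (f : X ⟶ Y) (Z Z' : C) (e : X ⟶ Z) (m : Z ⟶ Y)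
      (e' : X ⟶ Z') (m' : Z' ⟶ Y), E e → M m → E e' → M m' →
      e ≫ m = f → e' ≫ m' = f →
      ∃! g : Z ≅ Z', e ≫ g.hom = e' ∧ g.hom ≫ m' = m)
    -- `E` and `M` contain all isomorphisms and are closed under composition
    (hEiso : ∀ {X Y : C} (f : X ⟶ Y), IsIso f → E f)
    (hMiso : ∀ {X Y : C} (f : X ⟶ Y), IsIso f → M f)
    (hEcomp : ∀ {X Y Z : C} (f : X ⟶ Y) (g : Y ⟶ Z), E f → E g → E (f ≫ g))
    (hMcomp : ∀ {X Y Z : C} (f : X ⟶ Y) (g : Y ⟶ Z), M f → M g → M (f ≫ g))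
    -- properness
    (hEepi : ∀ {X Y : C} (f : X ⟶ Y), E f → Epi f)
    (hMmono : ∀ {X Y : C} (f : X ⟶ Y), M f → Mono f)
    -- finitely `M`-well-powered
    (hwp : ∀ b : C, Finite (MSubClasses M b))
    {a : C} (f : a ⟶ a) (hf : M f) : IsIso f :=
  stmt12_general M hMcomp hMmono hwp f hf
end

section
/- The number of m-dimensional subspaces of an n-dimensional vector space over the finite field F_p equals the Gaussian binomial coefficient binom(n, m)_p = ∏_{i=0}^{m-1} (p^{n-i} − 1)/(p^{m-i} − 1). -/
/-!
Count the linearly independent `m`-tuples of `V` in two ways. Directly, there are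
`∏_{i<m} (p^n - p^i)` of them. Grouped by the subspace `W` they span, each `m`-dimensional `W`
receives exactly its own linearly independent `m`-tuples, `∏_{i<m} (p^m - p^i)` of them. Dividing,
and cancelling `p^i` from the `i`-th factors, gives the Gaussian binomial coefficient. When `m > n`
both sides vanish, the right one through its factor `i = n`.
-/

open Module Submodule

theorem Nat.card_eq_card_mul_of_card_fiber {α β : Type*} [Finite α] [Finite β] (f : α → β)
    {c : ℕ} (hf : ∀ b, Nat.card {a // f a = b} = c) : Nat.card α = Nat.card β * c := by
  have := Fintype.ofFinite β
  rw [← Nat.card_congr (Equiv.sigmaFiberEquiv f), Nat.card_sigma,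
    Finset.sum_congr rfl fun b _ => hf b, Finset.sum_const, Finset.card_univ, smul_eq_mul,
    Nat.card_eq_fintype_card]

section Subspaces

variable {K V : Type*} [DivisionRing K] [AddCommGroup V] [Module K V]

theorem span_range_subtype_comp {W : Submodule K V} {ι : Type*} (t : ι → W)
    (ht : span K (Set.range t) = ⊤) : span K (Set.range (W.subtype ∘ t)) = W := by
  rw [Set.range_comp, span_image, ht, Submodule.map_top, range_subtype]

def linearIndependentSpanEquiv {m : ℕ} (W : Submodule K V) [FiniteDimensional K W]
    (hW : finrank K W = m) :
    {s : {s : Fin m → V // LinearIndependent K s} // span K (Set.range s.1) = W} ≃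
      {t : Fin m → W // LinearIndependent K t} where
  toFun s := ⟨fun i => ⟨s.1.1 i, s.2.le (subset_span (Set.mem_range_self i))⟩,
    s.1.2.of_comp W.subtype⟩
  invFun t := ⟨⟨W.subtype ∘ t.1, t.2.map' W.subtype W.ker_subtype⟩,
    span_range_subtype_comp t.1 (t.2.span_eq_top_of_card_eq_finrank' (by simp [hW]))⟩
  left_inv _ := rfl
  right_inv _ := rfl

variable [Fintype K] [Finite V]

theorem card_linearIndependent_eq_card_finrank_mul (m : ℕ) :
    Nat.card {s : Fin m → V // LinearIndependent K s} =
      Nat.card {W : Submodule K V // finrank K W = m} *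
        ∏ i : Fin m, (Fintype.card K ^ m - Fintype.card K ^ i.val) := by
  refine Nat.card_eq_card_mul_of_card_fiber
    (fun s => ⟨span K (Set.range s.1), (finrank_span_eq_card s.2).trans (Fintype.card_fin m)⟩)
    fun W => ?_
  rw [Nat.card_congr ((Equiv.subtypeEquivRight fun _ => Subtype.ext_iff).trans
    (linearIndependentSpanEquiv W.1 W.2)), card_linearIndependent W.2.ge, W.2]

end Subspaces

theorem zpow_sub_sub_one_div_zpow_sub_sub_one {F : Type*} [Field F] {x : F} (hx : x ≠ 0)
    (a b i : ℕ) :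
    (x ^ ((a : ℤ) - i) - 1) / (x ^ ((b : ℤ) - i) - 1) = (x ^ a - x ^ i) / (x ^ b - x ^ i) := by
  have hxi : x ^ i ≠ 0 := pow_ne_zero i hx
  simp only [zpow_sub₀ hx, zpow_natCast, div_sub_one hxi]
  exact div_div_div_cancel_right₀ hxi _ _

theorem Nat.cast_prod_pow_sub_pow {R : Type*} [CommRing R] {q a m : ℕ} (hq : 0 < q)
    (hma : m ≤ a) :
    ((∏ i : Fin m, (q ^ a - q ^ i.val) : ℕ) : R) =
      ∏ i ∈ Finset.range m, ((q : R) ^ a - (q : R) ^ i) := by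
  rw [Fin.prod_univ_eq_prod_range (fun i => q ^ a - q ^ i), Nat.cast_prod]
  refine Finset.prod_congr rfl fun i hi => ?_
  rw [Nat.cast_sub (Nat.pow_le_pow_right hq ((Finset.mem_range.1 hi).le.trans hma)),
    Nat.cast_pow, Nat.cast_pow]

/-- The number of `m`-dimensional subspaces of an `n`-dimensional vector space over a
finite field with `p` elements is the Gaussian binomial coefficient
`∏_{i=0}^{m-1} (p^{n-i} − 1)/(p^{m-i} − 1)`. -/
theorem stmt14 (p : ℕ) (K : Type*) [Field K] [Fintype K] (hK : Fintype.card K = p)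
    (V : Type*) [AddCommGroup V] [Module K V] [FiniteDimensional K V]
    (n m : ℕ) (hn : Module.finrank K V = n) :
    (Nat.card {W : Submodule K V // Module.finrank K W = m} : ℚ) =
      ∏ i ∈ Finset.range m,
        (((p : ℚ) ^ ((n : ℤ) - (i : ℤ)) - 1) / ((p : ℚ) ^ ((m : ℤ) - (i : ℤ)) - 1)) := by
  have : Finite V := Module.finite_of_finite K
  have hp : 1 < p := hK ▸ Fintype.one_lt_card
  have hp0 : 0 < p := by omega
  have hp' : (1 : ℚ) < p := by exact_mod_cast hp
  rcases le_or_gt m n with hmn | hnm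
  · have hcount := card_linearIndependent_eq_card_finrank_mul (K := K) (V := V) m
    rw [card_linearIndependent (hn ▸ hmn), hK, hn] at hcount
    have hdenom : ∏ i ∈ Finset.range m, ((p : ℚ) ^ m - (p : ℚ) ^ i) ≠ 0 :=
      Finset.prod_ne_zero_iff.2 fun i hi =>
        sub_ne_zero.2 (pow_lt_pow_right₀ hp' (Finset.mem_range.1 hi)).ne'
    rw [Finset.prod_congr rfl fun i _ =>
        zpow_sub_sub_one_div_zpow_sub_sub_one (by positivity) n m i, Finset.prod_div_distrib,
      eq_div_iff hdenom, ← Nat.cast_prod_pow_sub_pow hp0 hmn,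
      ← Nat.cast_prod_pow_sub_pow hp0 le_rfl, ← Nat.cast_mul, hcount]
  · have : IsEmpty {W : Submodule K V // Module.finrank K W = m} :=
      ⟨fun W => by have := W.1.finrank_le; omega⟩
    rw [Nat.card_of_isEmpty, Nat.cast_zero, eq_comm]
    exact Finset.prod_eq_zero (Finset.mem_range.2 hnm) (by simp)
end

section
/- Let X be the canonical n-parameter set A^n over a finite alphabet A, and let Y be an m-parameter set. Then the number of m-parameter subsets of A^n equals the number of partitions of the set A ⊔ {1, …, n} into |A| + m non-empty blocks such that the |A| elements of A lie in pairwise distinct blocks (i.e., the |A|-Stirling number of the second kind with parameters |A|+n and |A|+m). -/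
/-!
A parameter assignment `c : Fin n → A ⊕ Fin m` extends to the map `A ⊕ Fin n → A ⊕ Fin m`
that is the identity on `A`; when every label is used this map is onto, so its kernel is a
partition of `A ⊔ {1, …, n}` into `|A| + m` blocks separating the letters, and every such
partition arises this way. Two assignments give the same parameter set iff they give the same
partition: one direction because the set is recovered from the partition as the points
constant on its blocks (and equal to the letter in a block containing one), the other because,
as soon as `|A| ≥ 2`, substitutions separate the elements of `A ⊕ Fin m`, so the partition is
recovered from the set.
-/

/-- `S` is an `m`-parameter subset of `A^n`: it is determined by assigning each
coordinate either a constant from `A` or one of `m` parameter labels, with every label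
used at least once; the set consists of all points obtained by substituting alphabet
elements for the labels (equal labels receiving equal values). -/
def IsParamSubset (A : Type*) (n m : ℕ) (S : Set (Fin n → A)) : Prop :=
  ∃ c : Fin n → A ⊕ Fin m,
    (∀ j : Fin m, ∃ i : Fin n, c i = Sum.inr j) ∧
      S = {x | ∃ g : Fin m → A, ∀ i, x i = Sum.elim (fun a => a) g (c i)}

open Function

theorem Sum.forall_elim_id_eq_iff {A κ : Type*} [Nontrivial A] {u v : A ⊕ κ} :
    (∀ g : κ → A, Sum.elim id g u = Sum.elim id g v) ↔ u = v := by
  refine ⟨fun h => ?_, fun h _ => h ▸ rfl⟩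
  obtain ⟨a₀⟩ := ‹Nontrivial A›.to_nonempty
  rcases u with a | j <;> rcases v with b | j'
  · simpa using h fun _ => a₀
  · obtain ⟨b, hb⟩ := exists_ne a
    exact (hb (h fun _ => b).symm).elim
  · obtain ⟨a, ha⟩ := exists_ne b
    exact (ha (h fun _ => a)).elim
  · rcases eq_or_ne j j' with rfl | hne
    · rfl
    obtain ⟨b, hb⟩ := exists_ne a₀
    classical
    have := h (update (fun _ => b) j a₀)
    simp only [Sum.elim_inr, update_self, update_of_ne (Ne.symm hne)] at this
    exact (hb this.symm).elim

theorem Nat.card_range_eq_of_forall_eq_iff {ι α β : Type*} {f : ι → α} {g : ι → β}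
    (h : ∀ x y, f x = f y ↔ g x = g y) : Nat.card (Set.range f) = Nat.card (Set.range g) := by
  have hker : Setoid.ker f = Setoid.ker g := Setoid.ext h
  rw [← Nat.card_congr (Setoid.quotientKerEquivRange f),
    ← Nat.card_congr (Setoid.quotientKerEquivRange g), hker]

theorem exists_sum_fin_equiv_comp_inl {α Q : Type*} [Finite Q] {m : ℕ} {J : α → Q}
    (hJ : Injective J) (hcard : Nat.card Q = Nat.card α + m) :
    ∃ F : α ⊕ Fin m ≃ Q, F ∘ Sum.inl = J := by
  classical
  have hcompl : Nat.card ↥(Set.range J)ᶜ = m := by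
    have := Nat.card_congr (Equiv.Set.sumCompl (Set.range J))
    rw [Nat.card_sum, Nat.card_range_of_injective hJ] at this
    omega
  let e : ↥(Set.range J)ᶜ ≃ Fin m := (Finite.equivFin _).trans (finCongr hcompl)
  refine ⟨(Equiv.sumCongr (Equiv.ofInjective J hJ) e.symm).trans
    (Equiv.Set.sumCompl (Set.range J)), ?_⟩
  funext a
  simp

namespace ParamSubset

variable {A ι κ : Type*}

def labelMap (c : ι → A ⊕ κ) : A ⊕ ι → A ⊕ κ := Sum.elim Sum.inl c

def labelSetoid (c : ι → A ⊕ κ) : Setoid (A ⊕ ι) := Setoid.ker (labelMap c)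

def paramSet (c : ι → A ⊕ κ) : Set (ι → A) :=
  {x | ∃ g : κ → A, ∀ i, x i = Sum.elim (fun a => a) g (c i)}

theorem paramSet_eq_range (c : ι → A ⊕ κ) :
    paramSet c = Set.range fun g : κ → A => Sum.elim id g ∘ c := by
  ext x
  simp only [paramSet, Set.mem_ofPred_eq, Set.mem_range, funext_iff, eq_comm (a := x _)]
  rfl

theorem elim_id_comp_labelMap (c : ι → A ⊕ κ) (g : κ → A) :
    Sum.elim id g ∘ labelMap c = Sum.elim id (Sum.elim id g ∘ c) := by
  ext (a | i) <;> rfl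

theorem labelMap_surjective {c : ι → A ⊕ κ} (hc : ∀ j, ∃ i, c i = Sum.inr j) :
    Surjective (labelMap c) := by
  rintro (a | j)
  · exact ⟨Sum.inl a, rfl⟩
  · obtain ⟨i, hi⟩ := hc j
    exact ⟨Sum.inr i, hi⟩

theorem labelSetoid_iff [Nontrivial A] (c : ι → A ⊕ κ) (x y : A ⊕ ι) :
    labelSetoid c x y ↔ ∀ p ∈ paramSet c, Sum.elim id p x = Sum.elim id p y := by
  rw [labelSetoid, Setoid.ker_def, ← Sum.forall_elim_id_eq_iff, paramSet_eq_range,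
    Set.forall_mem_range]
  simp only [← elim_id_comp_labelMap, comp_apply]

theorem paramSet_eq_setOf_labelSetoid {c : ι → A ⊕ κ} (hc : ∀ j, ∃ i, c i = Sum.inr j) :
    paramSet c = {p | ∀ x y, labelSetoid c x y → Sum.elim id p x = Sum.elim id p y} := by
  rw [paramSet_eq_range]
  ext p
  constructor
  · rintro ⟨g, rfl⟩ x y hxy
    rw [← elim_id_comp_labelMap, comp_apply, comp_apply, Setoid.ker_def.mp hxy]
  · intro hp
    choose r hr using hc
    refine ⟨fun j => p (r j), funext fun i => ?_⟩
    rcases hci : c i with a | j <;> simp only [comp_apply, hci]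
    · exact (hp (Sum.inr i) (Sum.inl a) (Setoid.ker_def.mpr (by simp [labelMap, hci]))).symm
    · exact (hp (Sum.inr i) (Sum.inr (r j)) (Setoid.ker_def.mpr (by simp [labelMap, hci, hr]))).symm

theorem paramSet_eq_iff_labelSetoid_eq [Nontrivial A] {c c' : ι → A ⊕ κ}
    (hc : ∀ j, ∃ i, c i = Sum.inr j) (hc' : ∀ j, ∃ i, c' i = Sum.inr j) :
    paramSet c = paramSet c' ↔ labelSetoid c = labelSetoid c' := by
  refine ⟨fun h => Setoid.ext fun x y => ?_, fun h => ?_⟩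
  · rw [labelSetoid_iff, labelSetoid_iff, h]
  · rw [paramSet_eq_setOf_labelSetoid hc, paramSet_eq_setOf_labelSetoid hc', h]

theorem card_quotient_labelSetoid [Finite A] {m : ℕ} {c : ι → A ⊕ Fin m}
    (hc : ∀ j, ∃ i, c i = Sum.inr j) :
    Nat.card (Quotient (labelSetoid c)) = Nat.card A + m := by
  rw [labelSetoid, Nat.card_congr (Setoid.quotientKerEquivOfSurjective _ (labelMap_surjective hc)),
    Nat.card_sum, Nat.card_eq_fintype_card (α := Fin m), Fintype.card_fin]

theorem labelSetoid_inl_iff (c : ι → A ⊕ κ) (a b : A) :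
    labelSetoid c (Sum.inl a) (Sum.inl b) ↔ a = b :=
  Setoid.ker_def.trans Sum.inl_injective.eq_iff

/-- The blocks not containing a letter are numbered by the labels. -/
theorem exists_labelSetoid_eq [Finite A] [Finite ι] {m : ℕ} (s : Setoid (A ⊕ ι))
    (hcard : Nat.card (Quotient s) = Nat.card A + m)
    (hinj : ∀ a b, s (Sum.inl a) (Sum.inl b) → a = b) :
    ∃ c : ι → A ⊕ Fin m, (∀ j, ∃ i, c i = Sum.inr j) ∧ labelSetoid c = s := by
  obtain ⟨F, hF⟩ := exists_sum_fin_equiv_comp_inl (J := fun a => Quotient.mk s (Sum.inl a))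
    (fun a b h => hinj a b (Quotient.exact h)) hcard
  have hlabel : labelMap (fun i => F.symm ⟦Sum.inr i⟧) = F.symm ∘ Quotient.mk s := by
    ext (a | i)
    · simp [labelMap, ← congrFun hF a]
    · rfl
  refine ⟨fun i => F.symm ⟦Sum.inr i⟧, fun j => ?_, ?_⟩
  · obtain ⟨x, hx⟩ := (F.symm.surjective.comp Quotient.mk_surjective) (Sum.inr j)
    rw [← hlabel] at hx
    rcases x with a | i
    · exact absurd hx Sum.inl_ne_inr
    · exact ⟨i, hx⟩
  · ext x y
    rw [labelSetoid, Setoid.ker_def, hlabel, comp_apply, comp_apply, F.symm.injective.eq_iff,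
      Quotient.eq]

theorem mem_range_labelSetoid_iff [Fintype A] [Finite ι] {m : ℕ} (s : Setoid (A ⊕ ι)) :
    s ∈ Set.range (fun c : {c : ι → A ⊕ Fin m // ∀ j, ∃ i, c i = Sum.inr j} =>
        labelSetoid c.1) ↔
      Nat.card (Quotient s) = Fintype.card A + m ∧
        ∀ a b : A, s (Sum.inl a) (Sum.inl b) → a = b := by
  rw [← Nat.card_eq_fintype_card]
  constructor
  · rintro ⟨⟨c, hc⟩, rfl⟩
    exact ⟨card_quotient_labelSetoid hc, fun a b => (labelSetoid_inl_iff c a b).mp⟩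
  · rintro ⟨hcard, hinj⟩
    obtain ⟨c, hc, rfl⟩ := exists_labelSetoid_eq s hcard hinj
    exact ⟨⟨c, hc⟩, rfl⟩

end ParamSubset

theorem stmt16_general (A : Type*) [Fintype A] (hA : 2 ≤ Fintype.card A)
    (n m : ℕ) :
    Nat.card {S : Set (Fin n → A) // IsParamSubset A n m S} =
      Nat.card {s : Setoid (A ⊕ Fin n) //
        Nat.card (Quotient s) = Fintype.card A + m ∧
          ∀ a b : A, s.r (Sum.inl a) (Sum.inl b) → a = b} := by
  have : Nontrivial A := Fintype.one_lt_card_iff_nontrivial.mp hA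
  let Assignment := {c : Fin n → A ⊕ Fin m // ∀ j, ∃ i, c i = Sum.inr j}
  calc Nat.card {S : Set (Fin n → A) // IsParamSubset A n m S}
      = Nat.card (Set.range fun c : Assignment => ParamSubset.paramSet c.1) :=
        Nat.card_congr <| Equiv.subtypeEquivRight fun _ =>
          ⟨fun ⟨c, hc, hS⟩ => ⟨⟨c, hc⟩, hS.symm⟩, fun ⟨⟨c, hc⟩, hS⟩ => ⟨c, hc, hS.symm⟩⟩
    _ = Nat.card (Set.range fun c : Assignment => ParamSubset.labelSetoid c.1) :=
        Nat.card_range_eq_of_forall_eq_iff fun c c' =>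
          ParamSubset.paramSet_eq_iff_labelSetoid_eq c.2 c'.2
    _ = _ := Nat.card_congr <|
        Equiv.subtypeEquivRight ParamSubset.mem_range_labelSetoid_iff

/-- The number of `m`-parameter subsets of `A^n` equals the `|A|`-Stirling number of the
second kind with parameters `|A| + n` and `|A| + m`: the number of partitions of
`A ⊔ {1, …, n}` (encoded as equivalence relations, i.e. `Setoid`s, on `A ⊕ Fin n`) into
`|A| + m` non-empty blocks such that the elements of `A` lie in pairwise distinct
blocks. -/
theorem stmt16 (A : Type*) [Fintype A] [DecidableEq A] (hA : 2 ≤ Fintype.card A)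
    (n m : ℕ) :
    Nat.card {S : Set (Fin n → A) // IsParamSubset A n m S} =
      Nat.card {s : Setoid (A ⊕ Fin n) //
        Nat.card (Quotient s) = Fintype.card A + m ∧
          ∀ a b : A, s.r (Sum.inl a) (Sum.inl b) → a = b} :=
  stmt16_general A hA n m
end

section
/- Let φ be a ℚ-linear combination of induced-subgraph counting functions whose patterns H₁, …, H_s are pairwise non-isomorphic and all have no isolated vertices. If some coefficient α_j is negative, then there exists a finite graph W, which is an induced subgraph of the disjoint union of H₁, …, H_s and has no isolated vertices, such that φ(W) differs from Ψ(W) for every function Ψ that is a nonnegative-integer linear combination of induced-subgraph counts with patterns among the isolated-vertex-free induced subgraphs of that disjoint union. -/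
/-!
For a vertex set `w` of the disjoint union `G₀`, let
`E w = Σ_k β_k [P_k ≅ G₀[w]] - Σ_i α_i [H_i ≅ G₀[w]]`. Counting induced copies by their vertex
sets gives `Ψ(G₀[u]) - φ(G₀[u]) = Σ_{w ⊆ u} E w`. All patterns are free of isolated vertices, so
`E` vanishes on sets inducing a graph with an isolated vertex; if `Ψ` and `φ` agreed on every
isolated-vertex-free `G₀[u]`, Möbius inversion over the subset lattice would force `E ≡ 0`. But on
the vertex set of the component `H_j` with `α_j < 0`, non-isomorphism of the patterns gives
`E = Σ_k β_k [P_k ≅ H_j] - α_j > 0`.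
-/

open SimpleGraph

/-- The disjoint union of a family of graphs. -/
def sigmaGraph {ι : Type*} {V : ι → Type*} (H : ∀ i, SimpleGraph (V i)) :
    SimpleGraph (Σ i, V i) where
  Adj a b := ∃ (i : ι) (x y : V i), (H i).Adj x y ∧ a = ⟨i, x⟩ ∧ b = ⟨i, y⟩
  symm := by
    constructor
    rintro a b ⟨i, x, y, h, rfl, rfl⟩
    exact ⟨i, y, x, h.symm, rfl, rfl⟩
  loopless := by
    constructor
    rintro a ⟨i, x, y, h, rfl, hxy⟩
    have : x = y := by simpa using hxy
    subst this
    exact (H i).loopless.irrefl x h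

open Finset

theorem Finset.eq_zero_of_sum_powerset_eq_zero {α M : Type*} [AddCommMonoid M]
    {p : Finset α → Prop} {E : Finset α → M} (hE : ∀ w, ¬p w → E w = 0)
    (hsum : ∀ u, p u → ∑ w ∈ u.powerset, E w = 0) (w : Finset α) : E w = 0 := by
  induction w using Finset.strongInduction with
  | _ w ih =>
    by_cases hw : p w
    · rw [← hsum w hw, sum_eq_single_of_mem w (mem_powerset_self w)]
      exact fun v hv hvw ↦ ih v ((mem_powerset.1 hv).ssubset_of_ne hvw)
    · exact hE w hw

namespace SimpleGraph

variable {V W : Type*} {G : SimpleGraph V} {G' : SimpleGraph W}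

theorem Iso.forall_exists_adj (e : G ≃g G') (h : ∀ v, ∃ w, G.Adj v w) :
    ∀ w, ∃ w', G'.Adj w w' := fun w ↦
  let ⟨x, hx⟩ := h (e.symm w)
  ⟨e x, by simpa using e.map_rel_iff.2 hx⟩

variable (G) in
noncomputable def induceInduceIso (A : Set V) (s : Finset A) :
    (G.induce A).induce s ≃g G.induce (s.map (Function.Embedding.subtype _) : Set V) where
  toEquiv := (Equiv.Set.image Subtype.val _ Subtype.val_injective).trans
    (Equiv.setCongr (Finset.coe_map (Function.Embedding.subtype _) s).symm)
  map_rel_iff' := Iff.rfl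

end SimpleGraph

open scoped Classical in
theorem indCount_induce {V γ : Type*} (P : SimpleGraph γ) (G : SimpleGraph V) (u : Finset V) :
    indCount P (G.induce (u : Set V)) =
      #(u.powerset.filter fun w : Finset V ↦ Nonempty (P ≃g G.induce (w : Set V))) := by
  rw [indCount, Nat.card_eq_fintype_card, Fintype.card_subtype]
  refine card_bij (fun s _ ↦ s.map (Function.Embedding.subtype _)) ?_ ?_ ?_
  · intro s hs
    simp only [mem_filter, mem_univ, true_and] at hs
    refine mem_filter.2 ⟨mem_powerset.2 fun a ha ↦ property_of_mem_map_subtype s ha, ?_⟩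
    exact ⟨hs.some.trans (induceInduceIso G _ _)⟩
  · intro s _ t _ h
    exact map_injective _ h
  · intro w hw
    obtain ⟨hwu, ⟨e⟩⟩ := mem_filter.1 hw
    have hmap : (w.subtype (· ∈ (u : Set V))).map (Function.Embedding.subtype _) = w :=
      subtype_map_of_mem (mem_powerset.1 hwu)
    refine ⟨w.subtype (· ∈ (u : Set V)), mem_filter.2 ⟨mem_univ _, ?_⟩, hmap⟩
    have e' := induceInduceIso G (u : Set V) (w.subtype (· ∈ (u : Set V)))
    rw [hmap] at e'
    exact ⟨e.trans e'.symm⟩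

section Weights

variable {V ι R : Type*} [Fintype ι] {W : ι → Type*}

open scoped Classical in
noncomputable def isoWeight [AddCommMonoid R] (c : ι → R) (Q : ∀ j, SimpleGraph (W j))
    (G : SimpleGraph V) : R :=
  ∑ j, if Nonempty (Q j ≃g G) then c j else 0

theorem sum_mul_indCount_induce [Semiring R] (c : ι → R) (Q : ∀ j, SimpleGraph (W j))
    (G : SimpleGraph V) (u : Finset V) :
    ∑ j, c j * (indCount (Q j) (G.induce (u : Set V)) : R) =
      ∑ w ∈ u.powerset, isoWeight c Q (G.induce (w : Set V)) := by
  classical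
  simp only [isoWeight, indCount_induce, card_filter, Nat.cast_sum, Nat.cast_ite, Nat.cast_one,
    Nat.cast_zero, mul_sum, mul_ite, mul_one, mul_zero]
  exact sum_comm

theorem isoWeight_eq_zero [AddCommMonoid R] (c : ι → R) {Q : ∀ j, SimpleGraph (W j)}
    (hQ : ∀ j v, ∃ w, (Q j).Adj v w) {G : SimpleGraph V} (hG : ¬∀ v, ∃ w, G.Adj v w) :
    isoWeight c Q G = 0 :=
  sum_eq_zero fun j _ ↦ if_neg fun ⟨e⟩ ↦ hG (e.forall_exists_adj (hQ j))

theorem isoWeight_nonneg [AddCommMonoid R] [PartialOrder R] [IsOrderedAddMonoid R] {c : ι → R}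
    (hc : 0 ≤ c) (Q : ∀ j, SimpleGraph (W j)) (G : SimpleGraph V) : 0 ≤ isoWeight c Q G :=
  sum_nonneg fun j _ ↦ by split_ifs; exacts [hc j, le_rfl]

theorem isoWeight_eq_of_iso [AddCommMonoid R] (c : ι → R) {Q : ∀ j, SimpleGraph (W j)}
    (hQ : ∀ i j, i ≠ j → IsEmpty (Q i ≃g Q j)) {G : SimpleGraph V} {j : ι} (e : Q j ≃g G) :
    isoWeight c Q G = c j := by
  refine (sum_eq_single j (fun i _ hi ↦ ?_) (fun h ↦ absurd (mem_univ j) h)).trans (if_pos ⟨e⟩)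
  exact if_neg fun ⟨e'⟩ ↦ (hQ i j hi).false (e'.trans e.symm)

end Weights

section SigmaGraph

variable {ι : Type*} {V : ι → Type*} (H : ∀ i, SimpleGraph (V i))

theorem sigmaGraph_adj_mk {i : ι} {x y : V i} :
    (sigmaGraph H).Adj ⟨i, x⟩ ⟨i, y⟩ ↔ (H i).Adj x y := by
  constructor
  · rintro ⟨j, x', y', h, hx, hy⟩
    obtain ⟨rfl, hx⟩ := Sigma.mk.inj_iff.1 hx
    obtain ⟨-, hy⟩ := Sigma.mk.inj_iff.1 hy
    rwa [eq_of_heq hx, eq_of_heq hy]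
  · exact fun h ↦ ⟨i, x, y, h, rfl, rfl⟩

def sigmaGraph.embedding (i : ι) : H i ↪g sigmaGraph H where
  toFun := Sigma.mk i
  inj' := sigma_mk_injective
  map_rel_iff' := sigmaGraph_adj_mk H

theorem exists_iso_sigmaGraph_induce [∀ i, Fintype (V i)] (i : ι) :
    ∃ u : Finset (Σ i, V i),
      Nonempty (H i ≃g (sigmaGraph H).induce (u : Set (Σ i, V i))) := by
  classical
  refine ⟨(Set.range (Sigma.mk i : V i → Σ i, V i)).toFinset, ?_⟩
  rw [Set.coe_toFinset]
  exact ⟨(sigmaGraph.embedding H i).isoInduceRange⟩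

end SigmaGraph

/-- Witness Theorem (graph case): let `φ = Σᵢ αᵢ · #Ind(Hᵢ, ·)` with pairwise
non-isomorphic patterns without isolated vertices, some coefficient being negative.
Let `G₀` be the disjoint union of the `Hᵢ`. Then for every function `Ψ` that is a
nonnegative-integer linear combination of induced-subgraph counts whose patterns are
isolated-vertex-free induced subgraphs of `G₀`, there is an isolated-vertex-free
induced subgraph `W` of `G₀` with `Ψ(W) ≠ φ(W)`. -/
theorem stmt18 {s : ℕ} (n : Fin s → ℕ) (H : ∀ i, SimpleGraph (Fin (n i)))
    (α : Fin s → ℚ)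
    (hni : ∀ i j, i ≠ j → IsEmpty (H i ≃g H j))
    (hpure : ∀ i, ∀ v, ∃ w, (H i).Adj v w)
    (hneg : ∃ j, α j < 0)
    (t : ℕ) (m : Fin t → ℕ) (P : ∀ j, SimpleGraph (Fin (m j))) (β : Fin t → ℕ)
    (hP : ∀ j, (∀ v, ∃ w, (P j).Adj v w) ∧
      ∃ u : Finset (Σ i, Fin (n i)),
        Nonempty (P j ≃g (sigmaGraph H).induce (u : Set (Σ i, Fin (n i))))) :
    ∃ u : Finset (Σ i, Fin (n i)),
      (∀ v : (u : Set (Σ i, Fin (n i))),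
        ∃ w, ((sigmaGraph H).induce (u : Set (Σ i, Fin (n i)))).Adj v w) ∧
      ∑ j, (β j : ℚ) *
          (indCount (P j) ((sigmaGraph H).induce (u : Set (Σ i, Fin (n i)))) : ℚ) ≠
        ∑ i, α i *
          (indCount (H i) ((sigmaGraph H).induce (u : Set (Σ i, Fin (n i)))) : ℚ) := by
  obtain ⟨j, hj⟩ := hneg
  obtain ⟨u, ⟨e⟩⟩ := exists_iso_sigmaGraph_induce H j
  by_contra! hcount
  set G := sigmaGraph H
  have hweight : ∀ w : Finset (Σ i, Fin (n i)),
      isoWeight (fun k ↦ (β k : ℚ)) P (G.induce w) - isoWeight α H (G.induce w) = 0 := by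
    refine eq_zero_of_sum_powerset_eq_zero (p := fun w ↦ ∀ v, ∃ x, (G.induce w).Adj v x)
      (fun w hisol ↦ ?_) (fun w hfree ↦ ?_)
    · rw [isoWeight_eq_zero _ (fun k ↦ (hP k).1) hisol, isoWeight_eq_zero _ hpure hisol, sub_self]
    · rw [sum_sub_distrib, ← sum_mul_indCount_induce, ← sum_mul_indCount_induce, hcount w hfree,
        sub_self]
  have hu := hweight u
  rw [isoWeight_eq_of_iso α hni e] at hu
  linarith [isoWeight_nonneg (fun k ↦ (β k).cast_nonneg (α := ℚ)) P (G.induce u)]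
end
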